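/- Define k(a,b) := (a − b + √((a−b)² + π a b))/a for a, b > 0, so that the Cheeger constant of the rectangle (−b,b)×(−a,a) equals 1/a + k(a,b)/(2b). Then for fixed a, the function b ↦ k(a,b) is strictly decreasing in b. -/

import Mathlib

/-
Completing the square, `(a - b)² + π a b = (b + (π - 2) a / 2)² + π (4 - π) a² / 4`, and the constant
term is positive because `π < 4`. So `a · k(a, b) - π a / 2` is `√(x² + e) - x` evaluated at a translate
`x` of `b`, with `e > 0`; and `√(x² + e) - x` is strictly decreasing, since `√(x² + e) > x`.
-/

open Real

/-- `k a b` measures the deviation of the rectangle's Cheeger constant from `1/a`. -/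
noncomputable def rectK (a b : ℝ) : ℝ :=
  (a - b + Real.sqrt ((a - b) ^ 2 + π * a * b)) / a

theorem strictAnti_sqrt_sq_add_sub {e : ℝ} (he : 0 < e) :
    StrictAnti fun x : ℝ => √(x ^ 2 + e) - x := by
  intro x y hxy
  have hx : x < √(x ^ 2 + e) := lt_sqrt_of_sq_lt (by linarith)
  have hsq : √(x ^ 2 + e) ^ 2 = x ^ 2 + e := sq_sqrt (by positivity)
  have key : √(y ^ 2 + e) < √(x ^ 2 + e) + (y - x) := by
    rw [sqrt_lt' (by linarith [sqrt_nonneg (x ^ 2 + e)])]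
    nlinarith [mul_pos (sub_pos.2 hxy) (sub_pos.2 hx)]
  simp only
  linarith

theorem rectK_eq_sqrt_sq_add_sub (a b : ℝ) :
    rectK a b = (π * a / 2 + (√((b + (π - 2) * a / 2) ^ 2 + π * (4 - π) * a ^ 2 / 4)
      - (b + (π - 2) * a / 2))) / a := by
  rw [rectK, show (a - b) ^ 2 + π * a * b
    = (b + (π - 2) * a / 2) ^ 2 + π * (4 - π) * a ^ 2 / 4 by ring]
  ring

theorem rectK_strictAnti (a : ℝ) (ha : 0 < a) :
    StrictAntiOn (fun b => rectK a b) (Set.Ioi (0 : ℝ)) := by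
  have he : 0 < π * (4 - π) * a ^ 2 / 4 := by
    have := sub_pos.mpr pi_lt_four
    positivity
  refine StrictAnti.strictAntiOn (fun b₁ b₂ hb => ?_) _
  simp only [rectK_eq_sqrt_sq_add_sub]
  exact div_lt_div_of_pos_right
    (add_lt_add_right (strictAnti_sqrt_sq_add_sub he (add_lt_add_left hb _)) _) ha
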